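/- arXiv:1010.6118 — 2 statements merged into one kernel-verified Lean document; each statement's English description precedes it below -/
import Mathlib

section
/- The integral of log(x)·log(1−x) over [0,1] equals 2 − π²/6. -/
/-!
Expand `log (1 - x) = -∑ xⁿ⁺¹ / (n + 1)` on `(0, 1)`. Every term of
`log x · log (1 - x) = ∑ xⁿ⁺¹ / (n + 1) · (-log x)` is nonnegative there, so the series may be
integrated termwise, and `∫₀¹ xᵐ log x = -1 / (m + 1)²` gives
`∑ 1 / ((n + 1)(n + 2)²) = ∑ (1 / (n + 1) - 1 / (n + 2)) - ∑ 1 / (n + 2)² = 1 - (ζ(2) - 1)`.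
-/

open MeasureTheory Set Filter Topology Real

theorem Antitone.hasSum_sub_succ {f : ℕ → ℝ} {l : ℝ} (hf : Antitone f)
    (hl : Tendsto f atTop (𝓝 l)) : HasSum (fun n => f n - f (n + 1)) (f 0 - l) := by
  rw [hasSum_iff_tendsto_nat_of_nonneg fun n => sub_nonneg.2 (hf n.le_succ)]
  simp_rw [Finset.sum_range_sub']
  exact tendsto_const_nhds.sub hl

theorem hasSum_one_div_succ_mul_add_two_sq :
    HasSum (fun n : ℕ => 1 / (((n : ℝ) + 1) * ((n : ℝ) + 2) ^ 2)) (2 - π ^ 2 / 6) := by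
  have telescoping : HasSum (fun n : ℕ => 1 / ((n : ℝ) + 1) - 1 / (((n + 1 : ℕ) : ℝ) + 1)) 1 := by
    simpa using (Antitone.hasSum_sub_succ (f := fun n : ℕ => 1 / ((n : ℝ) + 1))
      (fun m n h => by simp only; gcongr) tendsto_one_div_add_atTop_nhds_zero_nat)
  have zeta_two_tail : HasSum (fun n : ℕ => 1 / (((n + 2 : ℕ) : ℝ)) ^ 2) (π ^ 2 / 6 - 1) := by
    simpa [Finset.sum_range_succ] using (hasSum_nat_add_iff' 2).2 hasSum_zeta_two
  rw [show (2 : ℝ) - π ^ 2 / 6 = 1 - (π ^ 2 / 6 - 1) by ring]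
  refine (telescoping.sub zeta_two_tail).congr_fun fun n => ?_
  push_cast
  field_simp
  ring

theorem intervalIntegrable_pow_mul_log (m : ℕ) (a b : ℝ) :
    IntervalIntegrable (fun x => x ^ m * log x) volume a b :=
  intervalIntegral.intervalIntegrable_log'.continuousOn_mul (continuous_pow m).continuousOn

theorem integral_pow_mul_log (m : ℕ) :
    ∫ x in (0 : ℝ)..1, x ^ m * log x = -1 / ((m : ℝ) + 1) ^ 2 := by
  set F : ℝ → ℝ := fun x => x ^ (m + 1) * log x / (m + 1) - x ^ (m + 1) / ((m : ℝ) + 1) ^ 2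
  have hF_cont : Continuous F := by
    have : Continuous fun x : ℝ => x ^ m * (x * log x) :=
      (continuous_pow m).mul continuous_mul_log
    simp only [F, pow_succ, mul_assoc]
    fun_prop
  have hF_deriv : ∀ x ∈ Ioo (0 : ℝ) 1, HasDerivAt F (x ^ m * log x) x := by
    intro x hx
    have h : HasDerivAt F _ x :=
      (((hasDerivAt_pow (m + 1) x).mul (hasDerivAt_log hx.1.ne')).div_const ((m : ℝ) + 1)).sub
        ((hasDerivAt_pow (m + 1) x).div_const (((m : ℝ) + 1) ^ 2))
    refine h.congr_deriv ?_
    push_cast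
    field_simp [hx.1.ne']
    ring
  rw [intervalIntegral.integral_eq_sub_of_hasDerivAt_of_le zero_le_one hF_cont.continuousOn
    hF_deriv (intervalIntegrable_pow_mul_log m 0 1)]
  simp [F, neg_div]

theorem hasSum_integral_of_nonneg {ι α : Type*} [Countable ι] [MeasurableSpace α]
    {μ : Measure α} {F : ι → α → ℝ} {f : α → ℝ} (hF_int : ∀ n, Integrable (F n) μ)
    (hF_nonneg : ∀ n, 0 ≤ᵐ[μ] F n) (hF_sum : ∀ᵐ a ∂μ, HasSum (F · a) (f a))
    (h_summable : Summable fun n => ∫ a, F n a ∂μ) :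
    HasSum (fun n => ∫ a, F n a ∂μ) (∫ a, f a ∂μ) := by
  have h_norm : ∀ n, ∫ a, ‖F n a‖ ∂μ = ∫ a, F n a ∂μ := fun n =>
    integral_congr_ae <| (hF_nonneg n).mono fun a ha => Real.norm_of_nonneg ha
  have := hasSum_integral_of_summable_integral_norm hF_int (by simpa only [h_norm])
  rwa [integral_congr_ae (hF_sum.mono fun a ha => ha.tsum_eq)] at this

theorem hasSum_pow_div_mul_neg_log {x : ℝ} (hx : x ∈ Ioo (0 : ℝ) 1) :
    HasSum (fun n : ℕ => x ^ (n + 1) / (n + 1) * -log x) (log x * log (1 - x)) := by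
  have h := (hasSum_pow_div_log_of_abs_lt_one (abs_lt.2 ⟨by linarith [hx.1], hx.2⟩)).mul_right
    (-log x)
  rwa [neg_mul_neg, mul_comm] at h

theorem integral_Ioo_pow_div_mul_neg_log (n : ℕ) :
    ∫ x in Ioo (0 : ℝ) 1, x ^ (n + 1) / (n + 1) * -log x
      = 1 / (((n : ℝ) + 1) * ((n : ℝ) + 2) ^ 2) := by
  rw [← integral_Ioc_eq_integral_Ioo, ← intervalIntegral.integral_of_le zero_le_one]
  simp_rw [div_mul_eq_mul_div, mul_neg, neg_div, intervalIntegral.integral_neg,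
    intervalIntegral.integral_div, integral_pow_mul_log]
  push_cast
  field_simp
  ring

theorem log_mul_log_integral :
    ∫ x in (0:ℝ)..1, Real.log x * Real.log (1 - x) = 2 - Real.pi ^ 2 / 6 := by
  rw [intervalIntegral.integral_of_le zero_le_one, integral_Ioc_eq_integral_Ioo]
  have h_int : ∀ n : ℕ, Integrable (fun x => x ^ (n + 1) / (n + 1) * -log x)
      (volume.restrict (Ioo (0 : ℝ) 1)) := fun n => by
    have := ((intervalIntegrable_pow_mul_log (n + 1) 0 1).div_const ((n : ℝ) + 1)).neg
    refine (this.1.mono_set Ioo_subset_Ioc_self).congr (ae_of_all _ fun x => ?_)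
    simp only [Pi.neg_apply]
    ring
  have h_nonneg : ∀ n : ℕ, 0 ≤ᵐ[volume.restrict (Ioo (0 : ℝ) 1)]
      fun x => x ^ (n + 1) / (n + 1) * -log x := fun n =>
    ae_restrict_of_forall_mem measurableSet_Ioo fun x hx =>
      mul_nonneg (by have := hx.1.le; positivity) (neg_nonneg.2 (log_nonpos hx.1.le hx.2.le))
  have h_termwise := hasSum_integral_of_nonneg h_int h_nonneg
    (ae_restrict_of_forall_mem measurableSet_Ioo fun x hx => hasSum_pow_div_mul_neg_log hx)
    (by simpa only [integral_Ioo_pow_div_mul_neg_log]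
      using hasSum_one_div_succ_mul_add_two_sq.summable)
  simp only [integral_Ioo_pow_div_mul_neg_log] at h_termwise
  exact h_termwise.unique hasSum_one_div_succ_mul_add_two_sq
end

section
/- For every integer n ≥ 2, ∑_{k=0}^∞ 1/C(n+k, k) = n/(n−1), where C denotes the binomial coefficient. -/
/-! With `b k = 1 / C(m + k, k)`, Pascal's rule gives the telescoping identity
`(m + 1) (b k - b (k + 1)) = m / C(m + 1 + k, k)`, and `b k → 0` as soon as `m ≥ 1`.
Summing over `k` yields `∑ₖ 1 / C(m + 1 + k, k) = (m + 1) / m`, i.e. the claim with `n = m + 1`. -/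

open Filter Topology

theorem hasSum_sub_succ_of_antitone {f : ℕ → ℝ} {l : ℝ} (hf : Antitone f)
    (hl : Tendsto f atTop (𝓝 l)) : HasSum (fun n ↦ f n - f (n + 1)) (f 0 - l) := by
  rw [hasSum_iff_tendsto_nat_of_nonneg fun n ↦ sub_nonneg.2 (hf n.le_succ)]
  simp only [Finset.sum_range_sub']
  exact hl.const_sub (f 0)

namespace Nat

theorem add_one_mul_inv_choose_sub_inv_choose_succ (m k : ℕ) :
    ((m : ℝ) + 1) * (((m + k).choose k : ℝ)⁻¹ - ((m + k + 1).choose (k + 1) : ℝ)⁻¹) =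
      m * ((m + 1 + k).choose k : ℝ)⁻¹ := by
  have hA : ((m + k).choose k : ℝ) ≠ 0 := by exact_mod_cast (choose_pos (by omega)).ne'
  have hpascal : ((m + k + 1).choose (k + 1) : ℝ) = (m + k).choose k * (m + k + 1) / (k + 1) := by
    rw [eq_div_iff (by positivity)]
    exact_mod_cast (add_one_mul_choose_eq (m + k) k).symm.trans (mul_comm _ _)
  have hshift : ((m + 1 + k).choose k : ℝ) = (m + k).choose k * (m + 1 + k) / (m + 1) := by
    have h := choose_mul_succ_eq (m + k) k
    rw [show m + k + 1 - k = m + 1 by omega, Nat.add_right_comm m k 1] at h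
    rw [eq_div_iff (by positivity)]
    exact_mod_cast h.symm
  rw [hpascal, hshift]
  field_simp
  ring

theorem antitone_inv_choose_add (m : ℕ) :
    Antitone fun k : ℕ ↦ ((m + k).choose k : ℝ)⁻¹ := by
  refine antitone_nat_of_succ_le fun k ↦ sub_nonneg.1 ?_
  rw [← add_assoc]
  refine nonneg_of_mul_nonneg_right (a := (m : ℝ) + 1) ?_ (by positivity)
  rw [add_one_mul_inv_choose_sub_inv_choose_succ]
  positivity

theorem tendsto_inv_choose_add_atTop {m : ℕ} (hm : m ≠ 0) :
    Tendsto (fun k : ℕ ↦ ((m + k).choose k : ℝ)⁻¹) atTop (𝓝 0) := by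
  refine squeeze_zero (fun k ↦ by positivity) (fun k ↦ ?_) tendsto_one_div_add_atTop_nhds_zero_nat
  rw [one_div]
  refine inv_anti₀ (by positivity) ?_
  have h : (1 + k).choose k ≤ (m + k).choose k := choose_le_choose k (by omega)
  rw [add_comm 1 k, choose_succ_self_right] at h
  exact_mod_cast h

theorem hasSum_inv_choose_add_one_add {m : ℕ} (hm : m ≠ 0) :
    HasSum (fun k : ℕ ↦ ((m + 1 + k).choose k : ℝ)⁻¹) ((m + 1) / m) := by
  have hm' : (m : ℝ) ≠ 0 := by exact_mod_cast hm
  have h := (hasSum_sub_succ_of_antitone (antitone_inv_choose_add m)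
    (tendsto_inv_choose_add_atTop hm)).mul_left (((m : ℝ) + 1) / m)
  have hterm (k : ℕ) : ((m : ℝ) + 1) / m *
      (((m + k).choose k : ℝ)⁻¹ - ((m + (k + 1)).choose (k + 1) : ℝ)⁻¹) =
        ((m + 1 + k).choose k : ℝ)⁻¹ := by
    rw [div_mul_eq_mul_div, ← add_assoc, add_one_mul_inv_choose_sub_inv_choose_succ,
      mul_div_cancel_left₀ _ hm']
  simp only [hterm] at h
  simpa using h

end Nat

theorem sum_inv_binomial (n : ℕ) (hn : 2 ≤ n) :
    ∑' k : ℕ, (1 : ℝ) / (Nat.choose (n + k) k) = (n : ℝ) / ((n : ℝ) - 1) := by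
  obtain ⟨m, rfl⟩ : ∃ m, n = m + 1 := ⟨n - 1, by omega⟩
  have hm : m ≠ 0 := by omega
  simpa [one_div] using (Nat.hasSum_inv_choose_add_one_add hm).tsum_eq
end
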